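/- Let A_f be the 2×4 real matrix (1/√2)·[[1,0,−1,0],[0,1,0,−1]], let β > 0, α_f ≥ 0, t = α_f/β, and let a ∈ ℝ⁴ be such that A_f·a ≠ 0. Then the unique minimizer over z ∈ ℝ⁴ of the function L_f(z) = (β/2)·‖z − a‖₂² + α_f·‖A_f·z‖₂ is z* = a − (min(‖A_f·a‖₂, t)/‖A_f·a‖₂)·A_fᵀ·A_f·a. -/

import Mathlib

/-!
`A_f` has orthonormal rows, `A_f A_fᵀ = 1`, so the candidate `z*` satisfies
`A_f z* = S_t(A_f a)` and `z* - a = -A_fᵀ (A_f a - S_t(A_f a))`, where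
`S_t b = b - (min ‖b‖ t / ‖b‖) • b` is block soft thresholding. The inequality
`⟪y - S_t b, b - S_t b⟫ ≤ t (‖y‖ - ‖S_t b‖)` for all `y` says that `b - S_t b ∈ t ∂‖·‖(S_t b)`;
pulled back through the adjoint it gives `L_f z* + β/2 ‖z - z*‖² ≤ L_f z`, which yields
minimality and uniqueness at once.
-/

open scoped BigOperators
open Matrix

/-- The Euclidean norm on `ℝⁿ`. -/
noncomputable def euclNorm {n : ℕ} (v : Fin n → ℝ) : ℝ := Real.sqrt (∑ i, v i ^ 2)

/-- The matrix `A_f = (1/√2)·[[1,0,−1,0],[0,1,0,−1]]`. -/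
noncomputable def Af : Matrix (Fin 2) (Fin 4) ℝ :=
  (1 / Real.sqrt 2) • !![1, 0, -1, 0; 0, 1, 0, -1]

open scoped RealInnerProductSpace

section BlockSoftThreshold

variable {F : Type*} [NormedAddCommGroup F] [InnerProductSpace ℝ F]

noncomputable def blockSoftThreshold (t : ℝ) (b : F) : F :=
  b - (min ‖b‖ t / ‖b‖) • b

theorem blockSoftThreshold_eq_zero_of_norm_le {t : ℝ} {b : F} (hb : ‖b‖ ≤ t) :
    blockSoftThreshold t b = 0 := by
  rcases eq_or_ne b 0 with rfl | hb0
  · simp [blockSoftThreshold]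
  · rw [blockSoftThreshold, min_eq_left hb, div_self (norm_ne_zero_iff.2 hb0), one_smul,
      sub_self]

theorem blockSoftThreshold_eq_smul_of_le_norm {t : ℝ} {b : F} (hb : t ≤ ‖b‖) :
    blockSoftThreshold t b = (1 - t / ‖b‖) • b := by
  rw [blockSoftThreshold, min_eq_right hb, sub_smul, one_smul]

theorem norm_blockSoftThreshold_of_le_norm {t : ℝ} (ht : 0 ≤ t) {b : F} (hb : t ≤ ‖b‖) :
    ‖blockSoftThreshold t b‖ = ‖b‖ - t := by
  rcases (norm_nonneg b).eq_or_lt with hb0 | hb0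
  · rw [norm_eq_zero.1 hb0.symm] at hb ⊢
    simp [blockSoftThreshold, le_antisymm (by simpa using hb) ht]
  · have hc : 0 ≤ 1 - t / ‖b‖ := by rwa [sub_nonneg, div_le_one hb0]
    rw [blockSoftThreshold_eq_smul_of_le_norm hb, norm_smul, Real.norm_of_nonneg hc, sub_mul,
      div_mul_cancel₀ _ hb0.ne', one_mul]

theorem inner_sub_blockSoftThreshold_le {t : ℝ} (ht : 0 ≤ t) (b y : F) :
    ⟪y - blockSoftThreshold t b, b - blockSoftThreshold t b⟫ ≤
      t * (‖y‖ - ‖blockSoftThreshold t b‖) := by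
  have hCS := real_inner_le_norm y b
  rcases le_total ‖b‖ t with hb | hb
  · rw [blockSoftThreshold_eq_zero_of_norm_le hb, sub_zero, sub_zero, norm_zero, sub_zero]
    nlinarith [norm_nonneg y]
  rw [norm_blockSoftThreshold_of_le_norm ht hb, blockSoftThreshold_eq_smul_of_le_norm hb]
  rcases (norm_nonneg b).eq_or_lt with hb0 | hb0
  · obtain rfl : b = 0 := norm_eq_zero.1 hb0.symm
    simp only [smul_zero, sub_zero, inner_zero_right]
    nlinarith [norm_nonneg y]
  have hres : b - (1 - t / ‖b‖) • b = (t / ‖b‖) • b := by module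
  rw [hres, inner_smul_right, inner_sub_left, real_inner_smul_left, real_inner_self_eq_norm_sq]
  calc t / ‖b‖ * (⟪y, b⟫ - (1 - t / ‖b‖) * ‖b‖ ^ 2)
      = t / ‖b‖ * ⟪y, b⟫ - t * (‖b‖ - t) := by field_simp
    _ ≤ t / ‖b‖ * (‖y‖ * ‖b‖) - t * (‖b‖ - t) := by gcongr
    _ = t * (‖y‖ - (‖b‖ - t)) := by field_simp

end BlockSoftThreshold

section NormComp

variable {E F : Type*} [NormedAddCommGroup E] [InnerProductSpace ℝ E]
  [NormedAddCommGroup F] [InnerProductSpace ℝ F]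

theorem prox_norm_comp_add_sq_le (A : E →ₗ[ℝ] F) (B : F →ₗ[ℝ] E)
    (hadj : ∀ x y, ⟪B y, x⟫ = ⟪y, A x⟫) (hAB : ∀ y, A (B y) = y)
    {α β : ℝ} (hβ : 0 < β) (hα : 0 ≤ α) {a zstar : E}
    (hzstar : zstar = a - (min ‖A a‖ (α / β) / ‖A a‖) • B (A a)) (z : E) :
    β / 2 * ‖zstar - a‖ ^ 2 + α * ‖A zstar‖ + β / 2 * ‖z - zstar‖ ^ 2 ≤
      β / 2 * ‖z - a‖ ^ 2 + α * ‖A z‖ := by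
  set b := A a
  set bstar := blockSoftThreshold (α / β) b
  have hAz : A zstar = bstar := by
    simp only [hzstar, bstar, blockSoftThreshold, map_sub, map_smul, hAB, b]
  have hza : zstar - a = -B (b - bstar) := by
    simp only [hzstar, bstar, blockSoftThreshold, sub_sub_cancel, map_smul]
    abel
  have hinner : ⟪z - zstar, zstar - a⟫ = -⟪A z - bstar, b - bstar⟫ := by
    rw [hza, inner_neg_right, real_inner_comm, hadj, map_sub, hAz, real_inner_comm]
  have hexp : ‖z - a‖ ^ 2 = ‖z - zstar‖ ^ 2 + 2 * ⟪z - zstar, zstar - a⟫ + ‖zstar - a‖ ^ 2 := by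
    rw [← norm_add_sq_real, sub_add_sub_cancel]
  have hα_eq : α = β * (α / β) := by field_simp
  have key := mul_le_mul_of_nonneg_left
    (inner_sub_blockSoftThreshold_le (div_nonneg hα hβ.le) b (A z)) hβ.le
  rw [hexp, hinner, hAz, hα_eq]
  linarith

end NormComp

theorem inner_toEuclideanLin_transpose {m n : Type*} [Fintype m] [Fintype n] [DecidableEq m]
    [DecidableEq n] (M : Matrix m n ℝ) (x : EuclideanSpace ℝ n) (y : EuclideanSpace ℝ m) :
    ⟪Mᵀ.toEuclideanLin y, x⟫ = ⟪y, M.toEuclideanLin x⟫ := by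
  rw [← conjTranspose_eq_transpose_of_trivial, toEuclideanLin_conjTranspose_eq_adjoint,
    LinearMap.adjoint_inner_left]

theorem euclNorm_eq_norm_toLp {n : ℕ} (v : Fin n → ℝ) :
    euclNorm v = ‖(WithLp.toLp 2 v : EuclideanSpace ℝ (Fin n))‖ := by
  simp [euclNorm, EuclideanSpace.norm_eq]

theorem Af_mul_transpose : Af * Afᵀ = 1 := by
  have h : (Real.sqrt 2)⁻¹ * (Real.sqrt 2)⁻¹ = 2⁻¹ := by
    rw [← mul_inv, Real.mul_self_sqrt zero_le_two]
  ext i j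
  fin_cases i <;> fin_cases j <;>
    simp [Af, Matrix.mul_apply, Fin.sum_univ_four, h] <;> norm_num

theorem toEuclideanLin_Af_transpose_apply (y : EuclideanSpace ℝ (Fin 2)) :
    Af.toEuclideanLin (Afᵀ.toEuclideanLin y) = y := by
  rw [← LinearMap.comp_apply, ← toLpLin_mul_same, Af_mul_transpose, toLpLin_one]
  rfl

open WithLp

theorem prox_Af_norm_general
    (β αf : ℝ) (hβ : 0 < β) (hαf : 0 ≤ αf)
    (a : Fin 4 → ℝ) :
    let t : ℝ := αf / β
    let Lf : (Fin 4 → ℝ) → ℝ := fun z =>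
      β / 2 * euclNorm (z - a) ^ 2 + αf * euclNorm (Af.mulVec z)
    let zstar : Fin 4 → ℝ :=
      a - (min (euclNorm (Af.mulVec a)) t / euclNorm (Af.mulVec a)) •
        (Afᵀ.mulVec (Af.mulVec a))
    (∀ z : Fin 4 → ℝ, Lf zstar ≤ Lf z) ∧
    (∀ z : Fin 4 → ℝ, Lf z = Lf zstar → z = zstar) := by
  intro t Lf zstar
  set A := Af.toEuclideanLin
  have hL : ∀ z, Lf z = β / 2 * ‖toLp 2 z - toLp 2 a‖ ^ 2 + αf * ‖A (toLp 2 z)‖ := by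
    intro z
    simp only [Lf, euclNorm_eq_norm_toLp]
    rfl
  have hzstar : toLp 2 zstar = toLp 2 a -
      (min ‖A (toLp 2 a)‖ t / ‖A (toLp 2 a)‖) • Afᵀ.toEuclideanLin (A (toLp 2 a)) := by
    simp only [zstar, euclNorm_eq_norm_toLp]
    rfl
  have hopt (z) : Lf zstar + β / 2 * ‖toLp 2 z - toLp 2 zstar‖ ^ 2 ≤ Lf z := by
    rw [hL, hL]
    exact prox_norm_comp_add_sq_le A _ (inner_toEuclideanLin_transpose Af)
      toEuclideanLin_Af_transpose_apply hβ hαf hzstar _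
  refine ⟨fun z => le_of_add_le_of_nonneg_left (hopt z) (by positivity), fun z hz => ?_⟩
  have hsq : β / 2 * ‖toLp 2 z - toLp 2 zstar‖ ^ 2 ≤ 0 := by linarith [hopt z]
  by_contra hne
  have hpos : 0 < ‖toLp 2 z - toLp 2 zstar‖ :=
    norm_pos_iff.2 (sub_ne_zero.2 ((toLp_injective 2).ne hne))
  linarith [mul_pos (half_pos hβ) (pow_pos hpos 2)]

/-- Proposition 2 of the paper: the unique minimizer of
`L_f(z) = (β/2)‖z − a‖₂² + α_f‖A_f z‖₂` is
`z* = a − (min(‖A_f a‖₂, α_f/β)/‖A_f a‖₂) · A_fᵀ A_f a`, provided `A_f a ≠ 0`. -/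
theorem prox_Af_norm
    (β αf : ℝ) (hβ : 0 < β) (hαf : 0 ≤ αf)
    (a : Fin 4 → ℝ) (ha : Af.mulVec a ≠ 0) :
    let t : ℝ := αf / β
    let Lf : (Fin 4 → ℝ) → ℝ := fun z =>
      β / 2 * euclNorm (z - a) ^ 2 + αf * euclNorm (Af.mulVec z)
    let zstar : Fin 4 → ℝ :=
      a - (min (euclNorm (Af.mulVec a)) t / euclNorm (Af.mulVec a)) •
        (Afᵀ.mulVec (Af.mulVec a))
    (∀ z : Fin 4 → ℝ, Lf zstar ≤ Lf z) ∧
    (∀ z : Fin 4 → ℝ, Lf z = Lf zstar → z = zstar) :=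
  prox_Af_norm_general β αf hβ hαf a
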